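/- Let p be a probability vector with strictly positive entries, let t, β ∈ (0,1], and set g = −β log|T′| + t f_p on the irrationals of (0,1). Let a > 0 and let h be a positive function on the irrationals of (0,1) satisfying exp(−a|x−y|) ≤ h(x)/h(y) ≤ exp(a|x−y|) for all x, y. Define g̃ = g + log h − log(h∘T), and suppose that Σ_{n≥1} exp(g̃(1/(x+n))) = 1 for every irrational x ∈ (0,1) and that τ := sup_{n≥1} var_n(g̃)/(2/3)^n < ∞. Let μ be a Borel probability measure on [0,1] giving full mass to the irrationals and satisfying ∫ ( Σ_{n≥1} exp(g̃(1/(x+n))) w(1/(x+n)) ) dμ(x) = ∫ w dμ for every bounded Borel w. Then for every n ≥ 1, every (i_1,…,i_n) ∈ ℕ^n and every irrational z ∈ I_{i_1…i_n}: exp(−3τ − a) ≤ μ(I_{i_1…i_n}) / ( (p_{i_1}⋯p_{i_n})^t · |(T^n)′(z)|^{−β} ) ≤ exp(3τ + a). -/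

import Mathlib

open MeasureTheory Filter Set
open scoped ENNReal

instance : MeasurableSpace ℕ+ := ⊤

/-- The Gauss map `T x = 1/x - ⌊1/x⌋` (with `T 0 = 0`). -/
noncomputable def gaussMap (x : ℝ) : ℝ := if x = 0 then 0 else Int.fract x⁻¹

/-- Finite continued fraction approximants: `cfApprox n a` is the value of the
continued fraction `1/(a 0 + 1/(a 1 + ⋯))` truncated after `n` levels. -/
noncomputable def cfApprox : ℕ → (ℕ → ℕ+) → ℝ
  | 0, _ => 0
  | n + 1, a => (((a 0 : ℕ) : ℝ) + cfApprox n (fun k => a (k + 1)))⁻¹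

/-- The continued fraction coding map `Π : ℕ^ℕ → [0,1] ∖ ℚ`. -/
noncomputable def cfVal (a : ℕ → ℕ+) : ℝ := limUnder atTop (fun n => cfApprox n a)

/-- `p` is a countable probability vector `(p_n)_{n ≥ 1}`. -/
def IsProbVec (p : ℕ+ → ℝ) : Prop := (∀ n, 0 ≤ p n) ∧ HasSum p 1

/-- `m` is the Bernoulli product measure on `ℕ^ℕ` with weights `p`:
it assigns to each cylinder the product of the weights of its digits. -/
def IsBernoulli (p : ℕ+ → ℝ) (m : Measure (ℕ → ℕ+)) : Prop :=
  ∀ (n : ℕ) (i : ℕ → ℕ+),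
    m {a | ∀ k < n, a k = i k} = ENNReal.ofReal (∏ k ∈ Finset.range n, p (i k))

/-- Hausdorff dimension of a measure: `inf { dim_H A : μ A = 1 }`. -/
noncomputable def dimMeasure (μ : Measure ℝ) : ℝ≥0∞ :=
  ⨅ (A : Set ℝ) (_ : μ A = 1), dimH A


/-- The `k`-th continued fraction digit of `x`: `i_{k+1} = ⌊1/(T^k x)⌋`. -/
noncomputable def cfDigit (x : ℝ) (k : ℕ) : ℕ := ⌊(gaussMap^[k] x)⁻¹⌋₊

/-- The cylinder `I_{i_1…i_n}`: irrationals of `(0,1)` whose continued fraction expansion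
starts with the word `i`. -/
def wordCyl (n : ℕ) (i : Fin n → ℕ+) : Set ℝ :=
  {x | x ∈ Set.Ioo (0 : ℝ) 1 ∧ Irrational x ∧ ∀ k : Fin n, cfDigit x k = (i k : ℕ)}

/-- The Bernoulli potential `f_p = ∑_n (log p_n) 1_{I_n}`. -/
noncomputable def fPot (p : ℕ+ → ℝ) (x : ℝ) : ℝ :=
  if h : 0 < ⌊x⁻¹⌋₊ then Real.log (p ⟨⌊x⁻¹⌋₊, h⟩) else 0

/-- The normalized transfer operator
`(M w)(x) = ∑_{n ≥ 1} exp (g̃ (1/(x+n))) w (1/(x+n))` for the Gauss map. -/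
noncomputable def transferM (gt : ℝ → ℝ) (w : ℝ → ℝ) : ℝ → ℝ :=
  fun x => ∑' n : ℕ+, Real.exp (gt ((x + ((n : ℕ) : ℝ))⁻¹)) * w ((x + ((n : ℕ) : ℝ))⁻¹)

/-! Applying the invariance `∫ M w dμ = ∫ w dμ` once per letter of a word `v` of length `n` gives
`μ(I_v) = ∫ exp (S_n g̃ (ψ_v x)) dμ(x)`, where `ψ_v` is the inverse branch of `T^n` onto `I_v`
and `S_n` is the Birkhoff sum. Since `var_m g̃ ≤ τ (2/3)^m`, the Birkhoff sums at two points of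
`I_v` differ by at most `∑_{m ≤ n} τ (2/3)^m ≤ 2τ`, so `μ(I_v)` is within a factor `e^{2τ}` of
`exp (S_n g̃ z)`. The coboundary `log h - log (h ∘ T)` telescopes, so
`exp (S_n g̃ z) = (p_{i_1}⋯p_{i_n})^t |(T^n)'(z)|^{-β} · h z / h (T^n z)`, and the regularity of
`h` puts the last ratio in `[e^{-a}, e^a]`. -/

open Function

def gaussDomain : Set ℝ := {x | x ∈ Ioo (0 : ℝ) 1 ∧ Irrational x}

noncomputable def gaussBranch (d : ℕ+) (x : ℝ) : ℝ := (x + ((d : ℕ) : ℝ))⁻¹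

/-- The inverse branch `ψ_{v 0} ∘ ⋯ ∘ ψ_{v (n-1)}` of `T^n` onto the cylinder of the word `v`. -/
noncomputable def gaussInvBranch : (n : ℕ) → (Fin n → ℕ+) → ℝ → ℝ
  | 0, _ => id
  | n + 1, v => gaussBranch (v 0) ∘ gaussInvBranch n (Fin.tail v)

section GaussMap

variable {x : ℝ}

lemma gaussMap_mem (hx : x ∈ gaussDomain) : gaussMap x ∈ gaussDomain := by
  obtain ⟨⟨hx0, -⟩, hirr⟩ := hx
  have hfract : Irrational (Int.fract x⁻¹) := hirr.inv.sub_intCast _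
  rw [gaussMap, if_neg hx0.ne']
  exact ⟨⟨(Int.fract_nonneg _).lt_of_ne (Ne.symm hfract.ne_zero), Int.fract_lt_one _⟩, hfract⟩

lemma iterate_gaussMap_mem (hx : x ∈ gaussDomain) (k : ℕ) : gaussMap^[k] x ∈ gaussDomain := by
  induction k with
  | zero => exact hx
  | succ k ih => rw [iterate_succ_apply']; exact gaussMap_mem ih

lemma gaussBranch_mem (hx : x ∈ gaussDomain) (d : ℕ+) : gaussBranch d x ∈ gaussDomain := by
  obtain ⟨⟨hx0, -⟩, hirr⟩ := hx
  have hd : (1 : ℝ) ≤ (d : ℕ) := by exact_mod_cast d.pos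
  exact ⟨⟨by unfold gaussBranch; positivity, inv_lt_one_of_one_lt₀ (by linarith)⟩,
    (hirr.add_natCast d).inv⟩

lemma gaussMap_gaussBranch (hx : x ∈ gaussDomain) (d : ℕ+) : gaussMap (gaussBranch d x) = x := by
  rw [gaussMap, if_neg (gaussBranch_mem hx d).1.1.ne', gaussBranch, inv_inv,
    Int.fract_add_natCast, Int.fract_eq_self.2 ⟨hx.1.1.le, hx.1.2⟩]

lemma cfDigit_gaussBranch_zero (hx : x ∈ gaussDomain) (d : ℕ+) :
    cfDigit (gaussBranch d x) 0 = d := by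
  obtain ⟨⟨hx0, hx1⟩, -⟩ := hx
  rw [cfDigit, iterate_zero_apply, gaussBranch, inv_inv, Nat.floor_add_natCast hx0.le,
    Nat.floor_eq_zero.2 hx1, zero_add]

lemma cfDigit_succ (x : ℝ) (k : ℕ) : cfDigit x (k + 1) = cfDigit (gaussMap x) k := by
  rw [cfDigit, cfDigit, iterate_succ_apply]

end GaussMap

section Cylinders

variable {n : ℕ} {x : ℝ}

lemma wordCyl_subset_gaussDomain (v : Fin n → ℕ+) : wordCyl n v ⊆ gaussDomain :=
  fun _ hx => ⟨hx.1, hx.2.1⟩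

lemma wordCyl_zero (v : Fin 0 → ℕ+) : wordCyl 0 v = gaussDomain := by
  ext x; simp [wordCyl, gaussDomain]

lemma gaussBranch_mem_wordCyl_succ_iff (hx : x ∈ gaussDomain) (d : ℕ+) (v : Fin (n + 1) → ℕ+) :
    gaussBranch d x ∈ wordCyl (n + 1) v ↔ v 0 = d ∧ x ∈ wordCyl n (Fin.tail v) := by
  obtain ⟨hIoo, hirr⟩ := gaussBranch_mem hx d
  simp only [wordCyl, mem_ofPred_eq, Fin.forall_fin_succ, Fin.val_zero, Fin.val_succ, cfDigit_succ,
    gaussMap_gaussBranch hx, cfDigit_gaussBranch_zero hx, PNat.coe_inj, Fin.tail]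
  exact ⟨fun h => ⟨h.2.2.1.symm, hx.1, hx.2, h.2.2.2⟩,
    fun h => ⟨hIoo, hirr, h.1.symm, h.2.2.2⟩⟩

lemma gaussMap_mem_wordCyl_tail {v : Fin (n + 1) → ℕ+} (hx : x ∈ wordCyl (n + 1) v) :
    gaussMap x ∈ wordCyl n (Fin.tail v) := by
  obtain ⟨hIoo, hirr⟩ := gaussMap_mem (wordCyl_subset_gaussDomain v hx)
  exact ⟨hIoo, hirr, fun k => by rw [← cfDigit_succ]; exact hx.2.2 k.succ⟩

lemma gaussInvBranch_mem_wordCyl (hx : x ∈ gaussDomain) :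
    ∀ (n : ℕ) (v : Fin n → ℕ+), gaussInvBranch n v x ∈ wordCyl n v
  | 0, v => by rw [wordCyl_zero]; exact hx
  | n + 1, v => (gaussBranch_mem_wordCyl_succ_iff
      (wordCyl_subset_gaussDomain _ (gaussInvBranch_mem_wordCyl hx n (Fin.tail v))) _ v).2
      ⟨rfl, gaussInvBranch_mem_wordCyl hx n (Fin.tail v)⟩

end Cylinders

section Measurability

lemma measurable_gaussMap : Measurable gaussMap :=
  Measurable.ite (measurableSet_singleton 0) measurable_const (measurable_fract.comp measurable_inv)

lemma measurable_gaussBranch (d : ℕ+) : Measurable (gaussBranch d) :=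
  (measurable_add_const _).inv

lemma measurable_cfDigit (k : ℕ) : Measurable (cfDigit · k) :=
  Nat.measurable_floor.comp (measurable_inv.comp (measurable_gaussMap.iterate k))

lemma measurable_fPot (p : ℕ+ → ℝ) : Measurable (fPot p) :=
  (measurable_from_top (f := fun m : ℕ => if h : 0 < m then Real.log (p ⟨m, h⟩) else 0)).comp
    (Nat.measurable_floor.comp measurable_inv)

lemma measurableSet_gaussDomain : MeasurableSet gaussDomain :=
  measurableSet_Ioo.inter (Set.countable_range ((↑) : ℚ → ℝ)).measurableSet.compl

lemma measurableSet_wordCyl (n : ℕ) (v : Fin n → ℕ+) : MeasurableSet (wordCyl n v) := by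
  have hcyl : wordCyl n v = gaussDomain ∩ ⋂ k : Fin n, (cfDigit · k) ⁻¹' {(v k : ℕ)} := by
    ext x; simp [wordCyl, gaussDomain, and_assoc]
  rw [hcyl]
  exact measurableSet_gaussDomain.inter
    (.iInter fun k => measurable_cfDigit k (measurableSet_singleton _))

lemma measurable_gaussInvBranch : ∀ (n : ℕ) (v : Fin n → ℕ+), Measurable (gaussInvBranch n v)
  | 0, _ => measurable_id
  | n + 1, v => (measurable_gaussBranch (v 0)).comp (measurable_gaussInvBranch n (Fin.tail v))

lemma measurable_birkhoffSum_gaussMap {G : ℝ → ℝ} (hG : Measurable G) (n : ℕ) :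
    Measurable (birkhoffSum gaussMap G n) :=
  Finset.measurable_sum _ fun k _ => hG.comp (measurable_gaussMap.iterate k)

end Measurability

/-- `var_m G ≤ c m` for every `m ≥ 1`, the variation being taken over cylinders of length `m`. -/
def CylinderVarLE (G : ℝ → ℝ) (c : ℕ → ℝ) : Prop :=
  ∀ m : ℕ, 1 ≤ m → ∀ v : Fin m → ℕ+, ∀ x ∈ wordCyl m v, ∀ y ∈ wordCyl m v, |G x - G y| ≤ c m

namespace CylinderVarLE

variable {G : ℝ → ℝ} {c : ℕ → ℝ}

lemma congr (hG : CylinderVarLE G c) {G' : ℝ → ℝ} (hGG' : EqOn G G' gaussDomain) :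
    CylinderVarLE G' c := by
  intro m hm v x hx y hy
  rw [← hGG' (wordCyl_subset_gaussDomain v hx), ← hGG' (wordCyl_subset_gaussDomain v hy)]
  exact hG m hm v x hx y hy

lemma abs_birkhoffSum_sub_le (hG : CylinderVarLE G c) :
    ∀ (n : ℕ) (v : Fin n → ℕ+), ∀ x ∈ wordCyl n v, ∀ y ∈ wordCyl n v,
      |birkhoffSum gaussMap G n x - birkhoffSum gaussMap G n y| ≤ ∑ k ∈ Finset.range n, c (k + 1)
  | 0, _, _, _, _, _ => by simp
  | n + 1, v, x, hx, y, hy => by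
    rw [birkhoffSum_succ', birkhoffSum_succ', Finset.sum_range_succ, add_comm _ (c (n + 1)),
      add_sub_add_comm]
    exact (abs_add_le _ _).trans (add_le_add (hG (n + 1) n.succ_pos v x hx y hy)
      (abs_birkhoffSum_sub_le hG n _ _ (gaussMap_mem_wordCyl_tail hx) _
        (gaussMap_mem_wordCyl_tail hy)))

lemma bddAbove_image_gaussBranch (hG : CylinderVarLE G c) (d : ℕ+) :
    BddAbove ((G ∘ gaussBranch d) '' gaussDomain) := by
  rcases gaussDomain.eq_empty_or_nonempty with hempty | ⟨x₀, hx₀⟩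
  · simp [hempty]
  have hmem : ∀ x ∈ gaussDomain, gaussBranch d x ∈ wordCyl 1 (fun _ => d) := fun x hx =>
    (gaussBranch_mem_wordCyl_succ_iff hx d _).2 ⟨rfl, by rw [wordCyl_zero]; exact hx⟩
  refine ⟨G (gaussBranch d x₀) + c 1, ?_⟩
  rintro _ ⟨x, hx, rfl⟩
  have hclose := hG 1 le_rfl _ _ (hmem x hx) _ (hmem x₀ hx₀)
  dsimp only [comp_apply]
  linarith [le_abs_self (G (gaussBranch d x) - G (gaussBranch d x₀))]

end CylinderVarLE

def IsTransferInvariant (G : ℝ → ℝ) (μ : Measure ℝ) : Prop :=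
  ∀ w : ℝ → ℝ, Measurable w → (∃ C : ℝ, ∀ x, |w x| ≤ C) →
    ∫ x, transferM G w x ∂μ = ∫ x, w x ∂μ

section Transfer

variable {G : ℝ → ℝ} {μ : Measure ℝ}

lemma transferM_apply (g w : ℝ → ℝ) (x : ℝ) :
    transferM g w x = ∑' d : ℕ+, Real.exp (g (gaussBranch d x)) * w (gaussBranch d x) :=
  rfl

lemma IsTransferInvariant.congr {g : ℝ → ℝ} (hg : IsTransferInvariant g μ)
    (hfull : ∀ᵐ x ∂μ, x ∈ gaussDomain) (hgG : EqOn g G gaussDomain) :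
    IsTransferInvariant G μ := by
  intro w hw hwb
  rw [← hg w hw hwb]
  refine integral_congr_ae (hfull.mono fun x hx => ?_)
  simp only [transferM_apply, hgG (gaussBranch_mem hx _)]

lemma integral_indicator_wordCyl_succ (hinv : IsTransferInvariant G μ)
    (hfull : ∀ᵐ x ∂μ, x ∈ gaussDomain) (n : ℕ) (v : Fin (n + 1) → ℕ+) {F : ℝ → ℝ}
    (hF : Measurable F) (hFb : ∃ C, ∀ x ∈ gaussDomain, |F x| ≤ C) :
    ∫ x, (wordCyl (n + 1) v).indicator F x ∂μ =
      ∫ x, (wordCyl n (Fin.tail v)).indicator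
        (fun y => Real.exp (G (gaussBranch (v 0) y)) * F (gaussBranch (v 0) y)) x ∂μ := by
  obtain ⟨C, hC⟩ := hFb
  have hbound : ∀ x, |(wordCyl (n + 1) v).indicator F x| ≤ max C 0 := by
    intro x
    by_cases hx : x ∈ wordCyl (n + 1) v
    · rw [indicator_of_mem hx]
      exact (hC x (wordCyl_subset_gaussDomain v hx)).trans (le_max_left _ _)
    · simp [indicator_of_notMem hx]
  rw [← hinv _ (hF.indicator (measurableSet_wordCyl _ v)) ⟨_, hbound⟩]
  refine integral_congr_ae (hfull.mono fun x hx => ?_)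
  have hmem_iff := fun d => gaussBranch_mem_wordCyl_succ_iff hx d v
  rw [transferM_apply]
  by_cases hxv : x ∈ wordCyl n (Fin.tail v)
  · rw [indicator_of_mem hxv, tsum_eq_single (v 0) fun d hd => ?_,
      indicator_of_mem ((hmem_iff _).2 ⟨rfl, hxv⟩)]
    rw [indicator_of_notMem fun h => hd ((hmem_iff d).1 h).1.symm, mul_zero]
  · rw [indicator_of_notMem hxv]
    refine (tsum_congr fun d => ?_).trans tsum_zero
    rw [indicator_of_notMem fun h => hxv ((hmem_iff d).1 h).2, mul_zero]

theorem integral_indicator_wordCyl (hG : Measurable G)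
    (hGbdd : ∀ d, BddAbove ((G ∘ gaussBranch d) '' gaussDomain))
    (hinv : IsTransferInvariant G μ) (hfull : ∀ᵐ x ∂μ, x ∈ gaussDomain) :
    ∀ (n : ℕ) (v : Fin n → ℕ+) {F : ℝ → ℝ}, Measurable F →
      (∃ C, ∀ x ∈ gaussDomain, |F x| ≤ C) →
      ∫ x, (wordCyl n v).indicator F x ∂μ =
        ∫ x, Real.exp (birkhoffSum gaussMap G n (gaussInvBranch n v x)) *
          F (gaussInvBranch n v x) ∂μ
  | 0, v, F, _, _ => by
    rw [wordCyl_zero]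
    refine integral_congr_ae (hfull.mono fun x hx => ?_)
    simp [indicator_of_mem hx, gaussInvBranch]
  | n + 1, v, F, hF, ⟨C, hC⟩ => by
    obtain ⟨B, hB⟩ := hGbdd (v 0)
    have hbranch := measurable_gaussBranch (v 0)
    have hF' : Measurable fun x => Real.exp (G (gaussBranch (v 0) x)) * F (gaussBranch (v 0) x) :=
      (hG.comp hbranch).exp.mul (hF.comp hbranch)
    have hFb : ∀ x ∈ gaussDomain,
        |Real.exp (G (gaussBranch (v 0) x)) * F (gaussBranch (v 0) x)| ≤ Real.exp B * C :=
      fun x hx => by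
        rw [abs_mul, Real.abs_exp]
        exact mul_le_mul (Real.exp_le_exp.2 (hB ⟨x, hx, rfl⟩)) (hC _ (gaussBranch_mem hx _))
          (abs_nonneg _) (Real.exp_pos _).le
    rw [integral_indicator_wordCyl_succ hinv hfull n v hF ⟨C, hC⟩,
      integral_indicator_wordCyl hG hGbdd hinv hfull n (Fin.tail v) hF' ⟨_, hFb⟩]
    refine integral_congr_ae (hfull.mono fun x hx => ?_)
    have hψ := wordCyl_subset_gaussDomain _ (gaussInvBranch_mem_wordCyl hx n (Fin.tail v))
    simp only [gaussInvBranch, comp_apply, birkhoffSum_succ', gaussMap_gaussBranch hψ,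
      Real.exp_add]
    ring

lemma measureReal_wordCyl_eq_integral (hG : Measurable G)
    (hGbdd : ∀ d, BddAbove ((G ∘ gaussBranch d) '' gaussDomain))
    (hinv : IsTransferInvariant G μ) (hfull : ∀ᵐ x ∂μ, x ∈ gaussDomain)
    (n : ℕ) (v : Fin n → ℕ+) :
    μ.real (wordCyl n v) =
      ∫ x, Real.exp (birkhoffSum gaussMap G n (gaussInvBranch n v x)) ∂μ := by
  rw [← integral_indicator_one (measurableSet_wordCyl n v),
    integral_indicator_wordCyl hG hGbdd hinv hfull n v (F := 1) measurable_one ⟨1, by simp⟩]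
  simp

end Transfer
theorem measureReal_wordCyl_bounds {g G : ℝ → ℝ} {c : ℕ → ℝ} {μ : Measure ℝ}
    [IsProbabilityMeasure μ] (hG : Measurable G) (hgG : EqOn g G gaussDomain)
    (hvar : CylinderVarLE g c) (hinv : IsTransferInvariant g μ)
    (hfull : ∀ᵐ x ∂μ, x ∈ gaussDomain) {n : ℕ} {v : Fin n → ℕ+} {z : ℝ}
    (hz : z ∈ wordCyl n v) :
    Real.exp (-∑ k ∈ Finset.range n, c (k + 1)) * Real.exp (birkhoffSum gaussMap g n z) ≤
        μ.real (wordCyl n v) ∧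
      μ.real (wordCyl n v) ≤
        Real.exp (∑ k ∈ Finset.range n, c (k + 1)) * Real.exp (birkhoffSum gaussMap g n z) := by
  have hgz : birkhoffSum gaussMap g n z = birkhoffSum gaussMap G n z :=
    Finset.sum_congr rfl fun k _ =>
      hgG (iterate_gaussMap_mem (wordCyl_subset_gaussDomain v hz) k)
  replace hvar := hvar.congr hgG
  replace hinv := hinv.congr hfull hgG
  rw [hgz]
  set D := ∑ k ∈ Finset.range n, c (k + 1)
  set f : ℝ → ℝ := fun x => Real.exp (birkhoffSum gaussMap G n (gaussInvBranch n v x))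
  have hclose : ∀ᵐ x ∂μ, |birkhoffSum gaussMap G n (gaussInvBranch n v x) -
      birkhoffSum gaussMap G n z| ≤ D :=
    hfull.mono fun x hx =>
      hvar.abs_birkhoffSum_sub_le n v _ (gaussInvBranch_mem_wordCyl hx n v) z hz
  have hupper : ∀ᵐ x ∂μ, f x ≤ Real.exp D * Real.exp (birkhoffSum gaussMap G n z) :=
    hclose.mono fun x hx => by
      rw [← Real.exp_add, Real.exp_le_exp]; linarith [(abs_le.1 hx).2]
  have hlower : ∀ᵐ x ∂μ, Real.exp (-D) * Real.exp (birkhoffSum gaussMap G n z) ≤ f x :=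
    hclose.mono fun x hx => by
      rw [← Real.exp_add, Real.exp_le_exp]; linarith [(abs_le.1 hx).1]
  have hf : Integrable f μ :=
    .of_bound ((measurable_birkhoffSum_gaussMap hG n).comp
      (measurable_gaussInvBranch n v)).exp.aestronglyMeasurable _
      (hupper.mono fun x hx => by rwa [Real.norm_of_nonneg (Real.exp_pos _).le])
  rw [measureReal_wordCyl_eq_integral hG hvar.bddAbove_image_gaussBranch hinv hfull n v]
  constructor
  · simpa using integral_mono_ae (integrable_const _) hf hlower
  · simpa using integral_mono_ae hf (integrable_const _) hupper

section Potential

variable {h : ℝ → ℝ} {a : ℝ}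

lemma lipschitzOnWith_log_of_div_le_exp {s : Set ℝ} (hpos : ∀ x ∈ s, 0 < h x)
    (hratio : ∀ x ∈ s, ∀ y ∈ s, h x / h y ≤ Real.exp (a * |x - y|)) :
    LipschitzOnWith (Real.toNNReal a) (fun x => Real.log (h x)) s :=
  LipschitzOnWith.of_le_add_mul' a fun x hx y hy => by
    have hlog := (Real.log_le_iff_le_exp (div_pos (hpos x hx) (hpos y hy))).2 (hratio x hx y hy)
    rw [Real.log_div (hpos x hx).ne' (hpos y hy).ne'] at hlog
    rw [Real.dist_eq]
    linarith

/-- `log h` is only controlled on the irrationals; a Lipschitz extension of it off them makes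
the potential measurable. -/
lemma exists_measurable_eqOn_potential {p : ℕ+ → ℝ} {t β : ℝ} {gt : ℝ → ℝ}
    (hgt : ∀ x, gt x =
      (-β * (-(2 * Real.log x)) + t * fPot p x) + Real.log (h x) - Real.log (h (gaussMap x)))
    (hpos : ∀ x ∈ gaussDomain, 0 < h x)
    (hratio : ∀ x ∈ gaussDomain, ∀ y ∈ gaussDomain, h x / h y ≤ Real.exp (a * |x - y|)) :
    ∃ G : ℝ → ℝ, Measurable G ∧ EqOn gt G gaussDomain := by
  obtain ⟨H, hHlip, hH⟩ := (lipschitzOnWith_log_of_div_le_exp hpos hratio).extend_real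
  refine ⟨fun x => (-β * (-(2 * Real.log x)) + t * fPot p x) + H x - H (gaussMap x), ?_,
    fun x hx => ?_⟩
  · have := measurable_fPot p
    have := hHlip.continuous.measurable
    have := measurable_gaussMap
    fun_prop
  · simp only [hgt, ← hH hx, ← hH (gaussMap_mem hx)]

lemma div_mem_Icc_of_div_le_exp (ha : 0 ≤ a) (hpos : ∀ x ∈ gaussDomain, 0 < h x)
    (hratio : ∀ x ∈ gaussDomain, ∀ y ∈ gaussDomain, h x / h y ≤ Real.exp (a * |x - y|))
    {x y : ℝ} (hx : x ∈ gaussDomain) (hy : y ∈ gaussDomain) :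
    h x / h y ∈ Icc (Real.exp (-a)) (Real.exp a) := by
  have hdiv_le : ∀ x ∈ gaussDomain, ∀ y ∈ gaussDomain, h x / h y ≤ Real.exp a :=
    fun x hx y hy => (hratio x hx y hy).trans <| Real.exp_le_exp.2 <| mul_le_of_le_one_right ha <|
      abs_sub_le_iff.2 ⟨by linarith [hx.1.2, hy.1.1], by linarith [hx.1.1, hy.1.2]⟩
  refine ⟨?_, hdiv_le x hx y hy⟩
  rw [Real.exp_neg, ← inv_div]
  exact inv_anti₀ (div_pos (hpos y hy) (hpos x hx)) (hdiv_le y hy x hx)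

lemma fPot_iterate_of_mem_wordCyl (p : ℕ+ → ℝ) {n : ℕ} {i : Fin n → ℕ+} {z : ℝ}
    (hz : z ∈ wordCyl n i) (k : Fin n) : fPot p (gaussMap^[k] z) = Real.log (p (i k)) := by
  have hdigit : ⌊(gaussMap^[k] z)⁻¹⌋₊ = i k := hz.2.2 k
  rw [fPot, dif_pos (hdigit ▸ (i k).pos)]
  congr

lemma birkhoffSum_comp_sub {α : Type*} (f : α → α) (u : α → ℝ) (n : ℕ) (x : α) :
    birkhoffSum f (u - u ∘ f) n x = u x - u (f^[n] x) := by
  have hcomp : birkhoffSum f (u ∘ f) n x = birkhoffSum f u n (f x) := by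
    simp only [birkhoffSum, comp_apply, ← iterate_succ_apply' f, iterate_succ_apply]
  rw [birkhoffSum_sub, hcomp, ← neg_sub, birkhoffSum_apply_sub_birkhoffSum, neg_sub]

lemma exp_birkhoffSum_eq {p : ℕ+ → ℝ} {t β : ℝ} {gt : ℝ → ℝ}
    (hgt : ∀ x, gt x =
      (-β * (-(2 * Real.log x)) + t * fPot p x) + Real.log (h x) - Real.log (h (gaussMap x)))
    (hppos : ∀ n, 0 < p n) (hhpos : ∀ x ∈ gaussDomain, 0 < h x)
    {n : ℕ} {i : Fin n → ℕ+} {z : ℝ} (hz : z ∈ wordCyl n i) :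
    Real.exp (birkhoffSum gaussMap gt n z) =
      ((∏ k : Fin n, p (i k) ^ t) * (∏ k ∈ Finset.range n, (gaussMap^[k] z) ^ 2) ^ β) *
        (h z / h (gaussMap^[n] z)) := by
  have hzD := wordCyl_subset_gaussDomain i hz
  set φ : ℝ → ℝ := fun x => β * Real.log (x ^ 2) + t * fPot p x
  have hcoboundary :
      gt = φ + ((fun x => Real.log (h x)) - (fun x => Real.log (h x)) ∘ gaussMap) := by
    funext x
    simp only [φ, hgt, Pi.add_apply, Pi.sub_apply, comp_apply, Real.log_pow]
    push_cast
    ring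
  have hterm : ∀ k : Fin n, Real.exp (φ (gaussMap^[k] z)) =
      ((gaussMap^[k] z) ^ 2) ^ β * p (i k) ^ t := by
    intro k
    have hsq : 0 < (gaussMap^[k] z) ^ 2 := pow_pos (iterate_gaussMap_mem hzD k).1.1 2
    dsimp only [φ]
    rw [fPot_iterate_of_mem_wordCyl p hz, Real.exp_add, Real.rpow_def_of_pos hsq,
      Real.rpow_def_of_pos (hppos _), mul_comm β, mul_comm t]
  rw [hcoboundary, birkhoffSum_add', birkhoffSum_comp_sub, Real.exp_add, Real.exp_sub,
    Real.exp_log (hhpos z hzD), Real.exp_log (hhpos _ (iterate_gaussMap_mem hzD n)), birkhoffSum,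
    ← Fin.sum_univ_eq_sum_range (fun k => φ (gaussMap^[k] z)), Real.exp_sum,
    Finset.prod_congr rfl fun k _ => hterm k, Finset.prod_mul_distrib,
    Real.finsetProd_rpow _ _ fun k _ => sq_nonneg _,
    Fin.prod_univ_eq_prod_range (fun k => (gaussMap^[k] z) ^ 2), mul_comm (_ ^ β)]

end Potential

lemma sum_range_mul_pow_succ_le {τ θ : ℝ} (hτ : 0 ≤ τ) (hθ₀ : 0 ≤ θ) (hθ₁ : θ < 1) (n : ℕ) :
    ∑ k ∈ Finset.range n, τ * θ ^ (k + 1) ≤ τ * (θ / (1 - θ)) := by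
  have hgeom := geom_sum_Ico_le_of_lt_one (m := 0) (n := n) hθ₀ hθ₁
  rw [← Finset.range_eq_Ico, pow_zero] at hgeom
  calc ∑ k ∈ Finset.range n, τ * θ ^ (k + 1) = τ * θ * ∑ k ∈ Finset.range n, θ ^ k := by
        rw [Finset.mul_sum]; exact Finset.sum_congr rfl fun k _ => by ring
    _ ≤ τ * θ * (1 / (1 - θ)) := mul_le_mul_of_nonneg_left hgeom (mul_nonneg hτ hθ₀)
    _ = τ * (θ / (1 - θ)) := by ring

lemma exp_mul_bounds_of_le {D τ a P r m : ℝ} (hD : D ≤ 3 * τ) (hP : 0 ≤ P)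
    (hr : r ∈ Icc (Real.exp (-a)) (Real.exp a))
    (hlo : Real.exp (-D) * (P * r) ≤ m) (hhi : m ≤ Real.exp D * (P * r)) :
    Real.exp (-(3 * τ + a)) * P ≤ m ∧ m ≤ Real.exp (3 * τ + a) * P := by
  have hr₀ : 0 ≤ r := (Real.exp_pos _).le.trans hr.1
  constructor
  · refine le_trans ?_ hlo
    calc Real.exp (-(3 * τ + a)) * P = Real.exp (-(3 * τ)) * (P * Real.exp (-a)) := by
          rw [neg_add, Real.exp_add]; ring
      _ ≤ Real.exp (-D) * (P * r) :=
          mul_le_mul (Real.exp_le_exp.2 (by linarith)) (mul_le_mul_of_nonneg_left hr.1 hP)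
            (mul_nonneg hP (Real.exp_pos _).le) (Real.exp_pos _).le
  · refine hhi.trans ?_
    calc Real.exp D * (P * r) ≤ Real.exp (3 * τ) * (P * Real.exp a) :=
          mul_le_mul (Real.exp_le_exp.2 hD) (mul_le_mul_of_nonneg_left hr.2 hP)
            (mul_nonneg hP hr₀) (Real.exp_pos _).le
      _ = Real.exp (3 * τ + a) * P := by rw [Real.exp_add]; ring

theorem uniform_gibbs_property_general
    (p : ℕ+ → ℝ) (hppos : ∀ n, 0 < p n)
    (t β : ℝ)
    (a : ℝ) (ha : 0 < a) (h : ℝ → ℝ)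
    (hhpos : ∀ x ∈ Set.Ioo (0 : ℝ) 1, Irrational x → 0 < h x)
    (hreg : ∀ x ∈ Set.Ioo (0 : ℝ) 1, ∀ y ∈ Set.Ioo (0 : ℝ) 1, Irrational x → Irrational y →
      Real.exp (-(a * |x - y|)) ≤ h x / h y ∧ h x / h y ≤ Real.exp (a * |x - y|))
    (gt : ℝ → ℝ)
    (hgt : ∀ x, gt x =
      (-β * (-(2 * Real.log x)) + t * fPot p x) + Real.log (h x) - Real.log (h (gaussMap x)))
    (τ : ℝ)
    (hτ : ∀ n : ℕ, 1 ≤ n → ∀ i : Fin n → ℕ+,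
      ∀ x ∈ wordCyl n i, ∀ y ∈ wordCyl n i, |gt x - gt y| ≤ τ * (2 / 3) ^ n)
    (μ : Measure ℝ) (hμ : IsProbabilityMeasure μ)
    (hfull : μ {x | x ∈ Set.Ioo (0 : ℝ) 1 ∧ Irrational x} = 1)
    (hinv : ∀ w : ℝ → ℝ, Measurable w → (∃ C : ℝ, ∀ x, |w x| ≤ C) →
      ∫ x, transferM gt w x ∂μ = ∫ x, w x ∂μ) :
    ∀ n : ℕ, 1 ≤ n → ∀ i : Fin n → ℕ+, ∀ z ∈ wordCyl n i,
      ENNReal.ofReal (Real.exp (-(3 * τ + a)) *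
          ((∏ k : Fin n, p (i k) ^ t) * (∏ k ∈ Finset.range n, (gaussMap^[k] z) ^ 2) ^ β))
        ≤ μ (wordCyl n i) ∧
      μ (wordCyl n i) ≤
        ENNReal.ofReal (Real.exp (3 * τ + a) *
          ((∏ k : Fin n, p (i k) ^ t) * (∏ k ∈ Finset.range n, (gaussMap^[k] z) ^ 2) ^ β)) := by
  intro n hn i z hz
  have hzD := wordCyl_subset_gaussDomain i hz
  have hae : ∀ᵐ x ∂μ, x ∈ gaussDomain :=
    mem_ae_iff.2 ((prob_compl_eq_zero_iff measurableSet_gaussDomain).2 hfull)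
  have hhpos' : ∀ x ∈ gaussDomain, 0 < h x := fun x hx => hhpos x hx.1 hx.2
  have hratio : ∀ x ∈ gaussDomain, ∀ y ∈ gaussDomain, h x / h y ≤ Real.exp (a * |x - y|) :=
    fun x hx y hy => (hreg x hx.1 y hy.1 hx.2 hy.2).2
  obtain ⟨G, hG, hgG⟩ := exists_measurable_eqOn_potential hgt hhpos' hratio
  have hτ₀ : 0 ≤ τ := nonneg_of_mul_nonneg_left (by simpa using hτ n hn i z hz z hz) (by positivity)
  have hD : ∑ k ∈ Finset.range n, τ * (2 / 3) ^ (k + 1) ≤ 3 * τ :=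
    (sum_range_mul_pow_succ_le hτ₀ (by norm_num) (by norm_num) n).trans (by norm_num; linarith)
  obtain ⟨hlo, hhi⟩ := measureReal_wordCyl_bounds hG hgG hτ hinv hae hz
  rw [exp_birkhoffSum_eq hgt hppos hhpos' hz] at hlo hhi
  have hP : 0 ≤ (∏ k : Fin n, p (i k) ^ t) * (∏ k ∈ Finset.range n, (gaussMap^[k] z) ^ 2) ^ β :=
    mul_nonneg (Finset.prod_nonneg fun k _ => Real.rpow_nonneg (hppos _).le _)
      (Real.rpow_nonneg (Finset.prod_nonneg fun k _ => sq_nonneg _) _)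
  obtain ⟨hlo', hhi'⟩ := exp_mul_bounds_of_le hD hP
    (div_mem_Icc_of_div_le_exp ha.le hhpos' hratio hzD (iterate_gaussMap_mem hzD n)) hlo hhi
  rw [← ofReal_measureReal]
  exact ⟨ENNReal.ofReal_le_ofReal hlo', ENNReal.ofReal_le_ofReal hhi'⟩

/-- **Uniform Gibbs property** (Lemma 4.7): let `g = -β log|T'| + t f_p`,
`g̃ = g + log h - log (h∘T)` be normalized (branch weights summing to `1`), with `h`
`a`-regular and `var_n(g̃) ≤ τ (2/3)^n`.  If `μ` is the associated invariant measure, then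
for every cylinder `I_{i_1…i_n}` and every `z ∈ I_{i_1…i_n}`,
`μ(I_{i_1…i_n})` is within multiplicative factor `exp(3τ + a)` of
`(p_{i_1}⋯p_{i_n})^t |(T^n)'(z)|^{-β}` (note `|(T^n)'(z)|^{-β} = (∏_{k<n} (T^k z)²)^β`). -/
theorem uniform_gibbs_property
    (p : ℕ+ → ℝ) (hp : IsProbVec p) (hppos : ∀ n, 0 < p n)
    (t β : ℝ) (ht : t ∈ Set.Ioc (0 : ℝ) 1) (hβ : β ∈ Set.Ioc (0 : ℝ) 1)
    (a : ℝ) (ha : 0 < a) (h : ℝ → ℝ)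
    (hhpos : ∀ x ∈ Set.Ioo (0 : ℝ) 1, Irrational x → 0 < h x)
    (hreg : ∀ x ∈ Set.Ioo (0 : ℝ) 1, ∀ y ∈ Set.Ioo (0 : ℝ) 1, Irrational x → Irrational y →
      Real.exp (-(a * |x - y|)) ≤ h x / h y ∧ h x / h y ≤ Real.exp (a * |x - y|))
    (gt : ℝ → ℝ)
    (hgt : ∀ x, gt x =
      (-β * (-(2 * Real.log x)) + t * fPot p x) + Real.log (h x) - Real.log (h (gaussMap x)))
    (hnorm : ∀ x ∈ Set.Ioo (0 : ℝ) 1, Irrational x →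
      ∑' n : ℕ+, Real.exp (gt ((x + ((n : ℕ) : ℝ))⁻¹)) = 1)
    (τ : ℝ)
    (hτ : ∀ n : ℕ, 1 ≤ n → ∀ i : Fin n → ℕ+,
      ∀ x ∈ wordCyl n i, ∀ y ∈ wordCyl n i, |gt x - gt y| ≤ τ * (2 / 3) ^ n)
    (μ : Measure ℝ) (hμ : IsProbabilityMeasure μ)
    (hfull : μ {x | x ∈ Set.Ioo (0 : ℝ) 1 ∧ Irrational x} = 1)
    (hinv : ∀ w : ℝ → ℝ, Measurable w → (∃ C : ℝ, ∀ x, |w x| ≤ C) →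
      ∫ x, transferM gt w x ∂μ = ∫ x, w x ∂μ) :
    ∀ n : ℕ, 1 ≤ n → ∀ i : Fin n → ℕ+, ∀ z ∈ wordCyl n i,
      ENNReal.ofReal (Real.exp (-(3 * τ + a)) *
          ((∏ k : Fin n, p (i k) ^ t) * (∏ k ∈ Finset.range n, (gaussMap^[k] z) ^ 2) ^ β))
        ≤ μ (wordCyl n i) ∧
      μ (wordCyl n i) ≤
        ENNReal.ofReal (Real.exp (3 * τ + a) *
          ((∏ k : Fin n, p (i k) ^ t) * (∏ k ∈ Finset.range n, (gaussMap^[k] z) ^ 2) ^ β)) :=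
  uniform_gibbs_property_general p hppos t β a ha h hhpos hreg gt hgt τ hτ μ hμ hfull hinv
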